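/- arXiv:1003.2759 — 4 statements merged into one kernel-verified Lean document; each statement's English description precedes it below -/
import Mathlib

section
/- For every n ≥ 1 there is no local homeomorphism from the unit sphere Sⁿ (the unit sphere in ℝⁿ⁺¹) to ℝⁿ. (The paper phrases this as: for n > 1 the sphere Sⁿ admits no Euclidean structure — there is no metrically accurate Euclidean atlas of the earth.) -/
/-- For every `n ≥ 1` there is no local homeomorphism from the unit sphere `Sⁿ`
(the unit sphere in `ℝⁿ⁺¹`) to `ℝⁿ`. -/
theorem no_local_homeomorph_sphere_to_euclidean (n : ℕ) (hn : 1 ≤ n) :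
    ¬ ∃ f : (Metric.sphere (0 : EuclideanSpace ℝ (Fin (n + 1))) 1) →
        EuclideanSpace ℝ (Fin n), IsLocalHomeomorph f := by
  rintro ⟨f, hf⟩
  -- the sphere is compact
  have hcs : IsCompact (Set.univ : Set (Metric.sphere (0 : EuclideanSpace ℝ (Fin (n + 1))) 1)) :=
    isCompact_univ
  -- range f is compact
  have hcomp : IsCompact (Set.range f) := by
    rw [← Set.image_univ]
    exact hcs.image hf.continuous
  -- range f is open
  have hopen : IsOpen (Set.range f) := hf.isOpenMap.isOpen_range
  -- range f is nonempty
  have hne : (Set.range f).Nonempty := by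
    haveI : Nontrivial (EuclideanSpace ℝ (Fin (n + 1))) := by
      have : 0 < n + 1 := Nat.succ_pos n
      infer_instance
    obtain ⟨x, hx⟩ := NormedSpace.sphere_nonempty (E := EuclideanSpace ℝ (Fin (n + 1)))
      (x := (0 : EuclideanSpace ℝ (Fin (n + 1)))) (r := 1) |>.2 zero_le_one
    exact ⟨f ⟨x, hx⟩, Set.mem_range_self _⟩
  -- clopen, nonempty in connected space → univ
  have hclopen : IsClopen (Set.range f) := ⟨hcomp.isClosed, hopen⟩
  have huniv : Set.range f = Set.univ := hclopen.eq_univ hne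
  -- so ℝⁿ is compact, contradiction with noncompactness
  have hcu : IsCompact (Set.univ : Set (EuclideanSpace ℝ (Fin n))) := huniv ▸ hcomp
  haveI : Nonempty (Fin n) := ⟨⟨0, hn⟩⟩
  haveI : Nontrivial (EuclideanSpace ℝ (Fin n)) :=
    inferInstanceAs (Nontrivial (PiLp 2 fun _ : Fin n => ℝ))
  exact (not_compactSpace_iff.2 inferInstance) (isCompact_univ_iff.1 hcu)
end

section
/- Consider the natural linear action of SL(2,ℤ) on ℝ². Every continuous map from the orbit space ℝ²/SL(2,ℤ) (with the quotient topology) to a Hausdorff topological space is constant. Equivalently, every continuous SL(2,ℤ)-invariant map from ℝ² to a Hausdorff space is constant. (The paper states this for the space of complete affine structures on the 2-torus, which identifies with this quotient: it admits no nonconstant continuous mappings into any Hausdorff space.) -/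
/-!
A continuous invariant map to a Hausdorff space is constant on the closure of any orbit, so it
suffices that the orbit of `(1, √2)` is dense. If `s = c + d√2` is small and nonzero with `c, d`
coprime, the matrices of `SL(2,ℤ)` with bottom row `(c, d)` send `(1, √2)` to the points
`(u + t s, s)`, `t ∈ ℤ`, which are `|s|`-dense along the horizontal axis. So the orbit closure
contains that axis, hence its images: the lines through all integer vectors, whose union is dense.
-/

/-- The linear action of `SL(2,ℤ)` on `ℝ²`. -/
def SL2ZAct (γ : Matrix.SpecialLinearGroup (Fin 2) ℤ) (v : Fin 2 → ℝ) : Fin 2 → ℝ :=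
  ((γ : Matrix (Fin 2) (Fin 2) ℤ).map (Int.cast : ℤ → ℝ)).mulVec v

open scoped MatrixGroups

def SL2ZOrbit (v : Fin 2 → ℝ) : Set (Fin 2 → ℝ) := Set.range fun γ => SL2ZAct γ v

lemma SL2ZAct_mul (γ δ : SL(2, ℤ)) (v : Fin 2 → ℝ) :
    SL2ZAct (γ * δ) v = SL2ZAct γ (SL2ZAct δ v) := by
  rw [SL2ZAct, SL2ZAct, SL2ZAct, Matrix.mulVec_mulVec, Matrix.SpecialLinearGroup.coe_mul]
  congr 1
  exact Matrix.map_mul (f := Int.castRingHom ℝ)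

lemma continuous_SL2ZAct (γ : SL(2, ℤ)) : Continuous (SL2ZAct γ) :=
  continuous_const.matrix_mulVec continuous_id

lemma SL2ZAct_mem_closure_SL2ZOrbit {v w : Fin 2 → ℝ} (γ : SL(2, ℤ))
    (hw : w ∈ closure (SL2ZOrbit v)) : SL2ZAct γ w ∈ closure (SL2ZOrbit v) :=
  map_mem_closure (continuous_SL2ZAct γ) hw fun _ ⟨δ, hδ⟩ => ⟨γ * δ, by simp [SL2ZAct_mul, ← hδ]⟩

lemma exists_SL2ZAct_eq_of_det {a b c d : ℤ} (h : a * d - b * c = 1) (v : Fin 2 → ℝ) :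
    ∃ γ, SL2ZAct γ v = ![a * v 0 + b * v 1, c * v 0 + d * v 1] := by
  refine ⟨⟨!![a, b; c, d], by rw [Matrix.det_fin_two_of, h]⟩, ?_⟩
  ext i; fin_cases i <;> simp [SL2ZAct, Matrix.mulVec, dotProduct, Fin.sum_univ_two]

lemma exists_SL2ZAct_eq_of_isCoprime {c d : ℤ} (hcd : IsCoprime c d) (v : Fin 2 → ℝ) :
    ∃ u : ℝ, ∀ t : ℤ, ∃ γ, SL2ZAct γ v = ![u + t * (c * v 0 + d * v 1), c * v 0 + d * v 1] := by
  obtain ⟨a, b, hab⟩ := hcd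
  have hdet (t : ℤ) : (b + t * c) * d - (t * d - a) * c = 1 := by linear_combination hab
  refine ⟨b * v 0 - a * v 1, fun t => ?_⟩
  obtain ⟨γ, hγ⟩ := exists_SL2ZAct_eq_of_det (hdet t) v
  refine ⟨γ, hγ.trans ?_⟩
  push_cast
  ring_nf

lemma exists_isCoprime_abs_add_mul_lt (ξ : ℝ) {ε : ℝ} (hε : 0 < ε) :
    ∃ c d : ℤ, IsCoprime c d ∧ d ≠ 0 ∧ |c + d * ξ| < ε := by
  obtain ⟨n, hn⟩ := exists_nat_one_div_lt hε
  obtain ⟨q, hq, -⟩ := Real.exists_rat_abs_sub_le_and_den_le ξ n.succ_pos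
  refine ⟨-q.num, q.den, q.isCoprime_num_den.neg_left, by exact_mod_cast q.den_ne_zero, ?_⟩
  have hden : (0 : ℝ) < q.den := by exact_mod_cast q.den_pos
  calc |((-q.num : ℤ) : ℝ) + ((q.den : ℤ) : ℝ) * ξ| = q.den * |ξ - q| := by
        rw [← abs_of_pos hden, ← abs_mul, Rat.cast_def]; push_cast; field_simp; ring_nf
    _ ≤ q.den * (1 / ((n.succ + 1) * q.den)) := by gcongr
    _ = 1 / (n.succ + 1) := by field_simp
    _ < ε := by
        refine lt_of_le_of_lt ?_ hn
        gcongr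
        linarith

lemma mem_closure_SL2ZOrbit_axis {α : ℝ} (hα : Irrational α) (x : ℝ) :
    ![x, 0] ∈ closure (SL2ZOrbit ![1, α]) := by
  refine Metric.mem_closure_iff.2 fun ε hε => ?_
  obtain ⟨c, d, hcd, hd, hs⟩ := exists_isCoprime_abs_add_mul_lt α hε
  obtain ⟨u, hu⟩ := exists_SL2ZAct_eq_of_isCoprime hcd ![1, α]
  simp only [Matrix.cons_val_zero, Matrix.cons_val_one, mul_one] at hu
  set s : ℝ := c + d * α
  have hs0 : s ≠ 0 := ((hα.intCast_mul hd).intCast_add c).ne_zero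
  obtain ⟨γ, hγ⟩ := hu (round ((x - u) / s))
  refine ⟨SL2ZAct γ ![1, α], ⟨γ, rfl⟩, ?_⟩
  rw [hγ, dist_pi_lt_iff hε, Fin.forall_fin_two]
  simp only [Matrix.cons_val_zero, Matrix.cons_val_one, Real.dist_eq, zero_sub, abs_neg]
  refine ⟨?_, hs⟩
  calc |x - (u + round ((x - u) / s) * s)| = |s| * |(x - u) / s - round ((x - u) / s)| := by
        rw [← abs_mul]; congr 1; field_simp; ring
    _ ≤ |s| * (1 / 2) := by gcongr; exact abs_sub_round _
    _ < ε := by linarith [abs_nonneg s]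

lemma mem_closure_SL2ZOrbit_of_axis {v : Fin 2 → ℝ} (h : ∀ x : ℝ, ![x, 0] ∈ closure (SL2ZOrbit v))
    (a c : ℤ) (x : ℝ) : ![a * x, c * x] ∈ closure (SL2ZOrbit v) := by
  rcases (Int.gcd a c).eq_zero_or_pos with h0 | hpos
  · obtain ⟨rfl, rfl⟩ := Int.gcd_eq_zero_iff.1 h0
    simpa using h 0
  obtain ⟨g, a', c', -, hg, rfl, rfl⟩ := Int.exists_gcd_one' hpos
  obtain ⟨u, w, huw⟩ := Int.isCoprime_iff_gcd_eq_one.2 hg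
  have hdet : a' * u - (-w) * c' = 1 := by linear_combination huw
  obtain ⟨γ, hγ⟩ := exists_SL2ZAct_eq_of_det hdet ![g * x, 0]
  have := SL2ZAct_mem_closure_SL2ZOrbit γ (h (g * x))
  rw [hγ] at this
  convert this using 2 <;> simp [mul_assoc]

lemma dense_SL2ZOrbit_of_axis {v : Fin 2 → ℝ} (h : ∀ x : ℝ, ![x, 0] ∈ closure (SL2ZOrbit v)) :
    Dense (SL2ZOrbit v) := by
  intro w
  rw [← closure_closure]
  refine Metric.mem_closure_iff.2 fun ε hε => ?_
  obtain ⟨n, hn⟩ := exists_nat_one_div_lt hε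
  set N : ℝ := n + 1
  have hN : 0 < N := by positivity
  refine ⟨![round (w 0 * N) * N⁻¹, round (w 1 * N) * N⁻¹], mem_closure_SL2ZOrbit_of_axis h _ _ _, ?_⟩
  rw [dist_pi_lt_iff hε, Fin.forall_fin_two]
  have key (y : ℝ) : dist y (round (y * N) * N⁻¹) < ε := by
    calc dist y (round (y * N) * N⁻¹) = |y * N - round (y * N)| / N := by
          rw [Real.dist_eq, eq_div_iff hN.ne', ← abs_of_pos hN, ← abs_mul, abs_of_pos hN]
          congr 1; field_simp
      _ ≤ (1 / 2) / N := by gcongr; exact abs_sub_round _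
      _ < ε := by
          refine lt_of_le_of_lt ?_ hn
          rw [div_div]; gcongr; linarith
  exact ⟨key _, key _⟩

lemma dense_SL2ZOrbit_of_irrational {α : ℝ} (hα : Irrational α) : Dense (SL2ZOrbit ![1, α]) :=
  dense_SL2ZOrbit_of_axis (mem_closure_SL2ZOrbit_axis hα)

lemma eq_of_dense_SL2ZOrbit {Z : Type*} [TopologicalSpace Z] [T2Space Z] {g : (Fin 2 → ℝ) → Z}
    (hg : Continuous g) (hinv : ∀ γ v, g (SL2ZAct γ v) = g v) {v : Fin 2 → ℝ}
    (hv : Dense (SL2ZOrbit v)) (w : Fin 2 → ℝ) : g w = g v :=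
  congrFun (hg.ext_on hv continuous_const fun _ ⟨γ, hγ⟩ => hγ ▸ hinv γ v) w

/-- Every continuous map from the orbit space `ℝ²/SL(2,ℤ)` (with the quotient
topology) to a Hausdorff topological space is constant. -/
theorem continuous_map_from_R2_mod_SL2Z_constant
    {Z : Type*} [TopologicalSpace Z] [T2Space Z]
    (f : Quot (fun v w : Fin 2 → ℝ => ∃ γ, SL2ZAct γ v = w) → Z)
    (hf : Continuous f) :
    ∀ a b, f a = f b := by
  have hinv (γ : SL(2, ℤ)) (v : Fin 2 → ℝ) :
      f (Quot.mk _ (SL2ZAct γ v)) = f (Quot.mk _ v) :=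
    congrArg f (Quot.sound ⟨γ, rfl⟩).symm
  have hconst := eq_of_dense_SL2ZOrbit (hf.comp continuous_quot_mk) hinv
    (dense_SL2ZOrbit_of_irrational irrational_sqrt_two)
  rintro ⟨a⟩ ⟨b⟩
  exact (hconst a).trans (hconst b).symm
end

section
/- (Mess; noncompactness of Margulis spacetimes.) Let Γ be a subgroup of the group of affine automorphisms of ℝ³ that is a free group of rank 2 (isomorphic to the free group on two generators) and acts properly discontinuously on ℝ³. Then the action of Γ is not cocompact: there is no compact subset K ⊆ ℝ³ with Γ·K = ℝ³. -/
set_option linter.unusedSectionVars false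


namespace MessAux

variable {α : Type*} [DecidableEq α]

/-- "no cancellation" between adjacent letters -/
def NC (a b : α × Bool) : Prop := ¬(a.1 = b.1 ∧ a.2 = !b.2)

lemma reduce_eq_self_of_chain : ∀ (L : List (α × Bool)), List.Chain' NC L →
    FreeGroup.reduce L = L
  | [], _ => rfl
  | [a], _ => rfl
  | a :: b :: L, h => by
      have h1 : List.Chain' NC (b :: L) := h.tail
      have h2 : NC a b := (List.isChain_cons_cons.mp h).1
      have ih := reduce_eq_self_of_chain (b :: L) h1
      rw [FreeGroup.reduce.cons, ih]
      exact if_neg h2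

lemma exists_bad : ∀ (L : List (α × Bool)), ¬ List.Chain' NC L →
    ∃ (L₁ L₂ : List (α × Bool)) (x : α) (c : Bool), L = L₁ ++ (x, c) :: (x, !c) :: L₂
  | [], h => absurd List.isChain_nil h
  | [a], h => absurd (List.isChain_singleton a) h
  | a :: b :: L, h => by
      by_cases hab : NC a b
      · have hnc : ¬ List.Chain' NC (b :: L) := fun hc => h (List.isChain_cons_cons.mpr ⟨hab, hc⟩)
        obtain ⟨L₁, L₂, x, c, hE⟩ := exists_bad (b :: L) hnc
        exact ⟨a :: L₁, L₂, x, c, by rw [List.cons_append, ← hE]⟩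
      · have hab' : a.1 = b.1 ∧ a.2 = !b.2 := not_not.mp hab
        refine ⟨[], L, a.1, a.2, ?_⟩
        have hb : b = (a.1, !a.2) := by
          obtain ⟨h1, h2⟩ := hab'
          obtain ⟨a1, a2⟩ := a
          obtain ⟨b1, b2⟩ := b
          simp_all
        simp [hb]

lemma chain'_toWord (u : FreeGroup α) : List.Chain' NC u.toWord := by
  by_contra h
  obtain ⟨L₁, L₂, x, c, hE⟩ := exists_bad _ h
  exact FreeGroup.reduce.not (p := False) ((FreeGroup.reduce_toWord u).trans hE)

lemma norm_inv_mul_of_head_ne (u w : FreeGroup α) {x y : α × Bool}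
    (hu : u.toWord.head? = some x) (hw : w.toWord.head? = some y) (hxy : x.1 ≠ y.1) :
    (u⁻¹ * w).norm = u.norm + w.norm := by
  have hchain : List.Chain' NC (u⁻¹.toWord ++ w.toWord) := by
    apply List.IsChain.append (chain'_toWord _) (chain'_toWord _)
    intro a ha b hb
    rw [FreeGroup.toWord_inv] at ha
    rw [show FreeGroup.invRev u.toWord
        = (u.toWord.map fun g : α × Bool => (g.1, !g.2)).reverse from rfl] at ha
    rw [List.getLast?_reverse, List.head?_map, hu] at ha
    have ha' : a = (x.1, !x.2) := by
      simpa using ha.symm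
    have hb' : b = y := by rw [hw] at hb; simpa using hb.symm
    intro hcontra
    apply hxy
    rw [ha'] at hcontra
    rw [hb'] at hcontra
    exact hcontra.1
  have h1 : u⁻¹ * w = FreeGroup.mk (u⁻¹.toWord ++ w.toWord) := by
    rw [← FreeGroup.mul_mk, FreeGroup.mk_toWord, FreeGroup.mk_toWord]
  show (u⁻¹ * w).toWord.length = u.toWord.length + w.toWord.length
  rw [h1, FreeGroup.toWord_mk, reduce_eq_self_of_chain _ hchain, List.length_append,
    FreeGroup.toWord_inv, FreeGroup.invRev_length]



lemma joinedIn_norm_gt {E : Type*} [NormedAddCommGroup E] [NormedSpace ℝ E]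
    (hrank : 1 < Module.rank ℝ E) {r : ℝ} (hr : 0 ≤ r) {p q : E}
    (hp : r < ‖p‖) (hq : r < ‖q‖) : JoinedIn {x : E | r < ‖x‖} p q := by
  set ρ := max ‖p‖ ‖q‖ with hρ
  have hρp : ‖p‖ ≤ ρ := le_max_left _ _
  have hρq : ‖q‖ ≤ ρ := le_max_right _ _
  have hρr : r < ρ := lt_of_lt_of_le hp hρp
  have hρ0 : 0 ≤ ρ := le_trans hr (le_of_lt hρr)
  have key : ∀ z : E, r < ‖z‖ → ‖z‖ ≤ ρ →
      JoinedIn {x : E | r < ‖x‖} z ((ρ / ‖z‖) • z) := by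
    intro z hz hzρ
    have hz0 : (0:ℝ) < ‖z‖ := lt_of_le_of_lt hr hz
    have h1 : (1:ℝ) ≤ ρ / ‖z‖ := (one_le_div hz0).mpr hzρ
    have hj : JoinedIn (Set.Icc (1:ℝ) (ρ / ‖z‖)) 1 (ρ / ‖z‖) :=
      ((convex_Icc _ _).isPathConnected ⟨1, Set.mem_Icc.mpr ⟨le_refl _, h1⟩⟩).joinedIn
        1 (Set.mem_Icc.mpr ⟨le_refl _, h1⟩) _ (Set.mem_Icc.mpr ⟨h1, le_refl _⟩)
    have h2 := hj.map (f := fun t : ℝ => t • z) (by continuity)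
    have h3 : ((fun t : ℝ => t • z) '' Set.Icc 1 (ρ / ‖z‖)) ⊆ {x : E | r < ‖x‖} := by
      rintro _ ⟨t, ⟨ht1, _⟩, rfl⟩
      have : ‖t • z‖ = t * ‖z‖ := by
        rw [norm_smul, Real.norm_eq_abs, abs_of_nonneg (le_trans zero_le_one ht1)]
      simp only [Set.mem_setOf_eq, this]
      nlinarith
    have h4 := h2.mono h3
    simpa [one_smul] using h4
  have hmem : ∀ z : E, r < ‖z‖ → ‖z‖ ≤ ρ → (ρ / ‖z‖) • z ∈ Metric.sphere (0:E) ρ := by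
    intro z hz hzρ
    have hz0 : (0:ℝ) < ‖z‖ := lt_of_le_of_lt hr hz
    have : ‖(ρ / ‖z‖) • z‖ = (ρ / ‖z‖) * ‖z‖ := by
      rw [norm_smul, Real.norm_eq_abs, abs_of_nonneg (by positivity)]
    rw [mem_sphere_zero_iff_norm, this]
    field_simp
  have hsph := (isPathConnected_sphere hrank (0:E) hρ0).joinedIn
      _ (hmem p hp hρp) _ (hmem q hq hρq)
  have hsub : Metric.sphere (0:E) ρ ⊆ {x : E | r < ‖x‖} := by
    intro x hx
    rw [mem_sphere_zero_iff_norm] at hx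
    simpa [hx] using hρr
  exact ((key p hp hρp).trans (hsph.mono hsub)).trans ((key q hq hρq).symm)

lemma one_lt_rank_E3 : 1 < Module.rank ℝ (EuclideanSpace ℝ (Fin 3)) := by
  rw [← Module.finrank_eq_rank]
  have h3 : Module.finrank ℝ (EuclideanSpace ℝ (Fin 3)) = 3 := finrank_euclideanSpace_fin
  rw [h3]
  norm_num


end MessAux


local notation "E3" => EuclideanSpace ℝ (Fin 3)

/-- **Mess.** A rank-two free group of affine automorphisms of `ℝ³` acting properly
discontinuously on `ℝ³` cannot act cocompactly. -/
theorem mess_not_cocompact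
    (Γ : Subgroup (EuclideanSpace ℝ (Fin 3) ≃ᵃ[ℝ] EuclideanSpace ℝ (Fin 3)))
    (hfree : Nonempty (Γ ≃* FreeGroup (Fin 2)))
    (hpd : ∀ K : Set (EuclideanSpace ℝ (Fin 3)), IsCompact K →
      {γ : Γ | ((γ : EuclideanSpace ℝ (Fin 3) ≃ᵃ[ℝ] EuclideanSpace ℝ (Fin 3)) '' K ∩ K).Nonempty}.Finite) :
    ¬ ∃ K : Set (EuclideanSpace ℝ (Fin 3)), IsCompact K ∧
      (⋃ γ : Γ, (γ : EuclideanSpace ℝ (Fin 3) ≃ᵃ[ℝ] EuclideanSpace ℝ (Fin 3)) '' K) = Set.univ := by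
  rintro ⟨K, hK, hcov⟩
  obtain ⟨φ⟩ := hfree
  -- `K` is nonempty
  have hKne : K.Nonempty := by
    by_contra h
    rw [Set.not_nonempty_iff_eq_empty] at h
    rw [h] at hcov
    simp only [Set.image_empty, Set.iUnion_empty] at hcov
    exact Set.empty_ne_univ hcov
  obtain ⟨x₀, hx₀⟩ := hKne
  -- the covering property pointwise
  have hcov' : ∀ x : E3, ∃ γ : Γ, x ∈ (γ : E3 ≃ᵃ[ℝ] E3) '' K := by
    intro x
    have hx : x ∈ ⋃ γ : Γ, (γ : E3 ≃ᵃ[ℝ] E3) '' K := by rw [hcov]; trivial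
    simpa using hx
  -- images of `K` are compact
  have himg : ∀ γ : Γ, IsCompact ((γ : E3 ≃ᵃ[ℝ] E3) '' K) := fun γ =>
    hK.image (AffineEquiv.continuous_of_finiteDimensional _)
  -- the finite set of "generators" and the bound N
  set F : Set Γ := {γ : Γ | ((γ : E3 ≃ᵃ[ℝ] E3) '' K ∩ K).Nonempty} with hFdef
  have hF : F.Finite := hpd K hK
  set N : ℕ := hF.toFinset.sup (fun γ => (φ γ).norm) with hNdef
  have hNle : ∀ γ ∈ F, (φ γ).norm ≤ N := fun γ hγ =>
    Finset.le_sup (f := fun γ => (φ γ).norm) (hF.mem_toFinset.mpr hγ)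
  -- the ball of radius N in Γ is finite
  have hballfin : ({γ : Γ | (φ γ).norm ≤ N}).Finite := by
    have h0 : ({l : List (Fin 2 × Bool) | l.length ≤ N}).Finite := List.finite_length_le _ N
    have h1 : ({w : FreeGroup (Fin 2) | w.norm ≤ N}).Finite :=
      h0.preimage (FreeGroup.toWord_injective.injOn)
    exact h1.preimage (φ.injective.injOn)
  -- the compact set C of all images of K by short elements, and a ball containing it
  set C : Set E3 := ⋃ γ ∈ {γ : Γ | (φ γ).norm ≤ N}, (γ : E3 ≃ᵃ[ℝ] E3) '' K with hCdef
  have hCcomp : IsCompact C := hballfin.isCompact_biUnion (fun γ _ => himg γ)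
  obtain ⟨r₀, hr₀⟩ := hCcomp.isBounded.subset_closedBall 0
  set r : ℝ := max r₀ 0 with hrdef
  have hrnn : (0:ℝ) ≤ r := le_max_right _ _
  have hCB : C ⊆ Metric.closedBall 0 r :=
    hr₀.trans (Metric.closedBall_subset_closedBall (le_max_left _ _))
  -- generators a b of Γ
  set a : Γ := φ.symm (FreeGroup.of 0) with hadef
  set b : Γ := φ.symm (FreeGroup.of 1) with hbdef
  have hφa : ∀ m : ℕ, φ (a ^ m) = (FreeGroup.of (0 : Fin 2)) ^ m := by
    intro m; rw [map_pow, hadef, MulEquiv.apply_symm_apply]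
  have hφb : ∀ m : ℕ, φ (b ^ m) = (FreeGroup.of (1 : Fin 2)) ^ m := by
    intro m; rw [map_pow, hbdef, MulEquiv.apply_symm_apply]
  -- the set of elements moving x₀ into the ball is finite
  set bad : Set Γ := {γ : Γ | (γ : E3 ≃ᵃ[ℝ] E3) x₀ ∈ Metric.closedBall 0 r} with hbaddef
  have hbadfin : bad.Finite := by
    have hcomp : IsCompact ({x₀} ∪ Metric.closedBall 0 r : Set E3) :=
      isCompact_singleton.union (isCompact_closedBall 0 r)
    refine (hpd _ hcomp).subset ?_
    intro γ hγ
    exact ⟨(γ : E3 ≃ᵃ[ℝ] E3) x₀, ⟨x₀, Or.inl rfl, rfl⟩, Or.inr hγ⟩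
  -- choose m large with a^m x₀ and b^m x₀ outside the ball
  have hainj : Function.Injective (fun m : ℕ => a ^ m) := by
    intro m n h
    have h2 := congrArg FreeGroup.norm (congrArg φ h)
    simpa [hφa, FreeGroup.norm_of_pow] using h2
  have hbinj : Function.Injective (fun m : ℕ => b ^ m) := by
    intro m n h
    have h2 := congrArg FreeGroup.norm (congrArg φ h)
    simpa [hφb, FreeGroup.norm_of_pow] using h2
  have hbadm : ({m : ℕ | (a ^ m : Γ) ∈ bad} ∪ {m : ℕ | (b ^ m : Γ) ∈ bad} ∪
      Set.Iic N).Finite :=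
    ((hbadfin.preimage hainj.injOn).union (hbadfin.preimage hbinj.injOn)).union
      (Set.finite_Iic N)
  obtain ⟨m, hm⟩ := hbadm.infinite_compl.nonempty
  simp only [Set.mem_compl_iff, Set.mem_union, Set.mem_setOf_eq, Set.mem_Iic, not_or,
    not_le] at hm
  obtain ⟨⟨hma, hmb⟩, hmN⟩ := hm
  -- the two far-away points p and q
  set p : E3 := ((a ^ m : Γ) : E3 ≃ᵃ[ℝ] E3) x₀ with hpdef
  set q : E3 := ((b ^ m : Γ) : E3 ≃ᵃ[ℝ] E3) x₀ with hqdef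
  have hpnorm : r < ‖p‖ := by
    have := hma
    simp only [hbaddef, Set.mem_setOf_eq, Metric.mem_closedBall, dist_zero_right, not_le]
      at this
    exact this
  have hqnorm : r < ‖q‖ := by
    have := hmb
    simp only [hbaddef, Set.mem_setOf_eq, Metric.mem_closedBall, dist_zero_right, not_le]
      at this
    exact this
  -- a path from p to q avoiding the ball
  obtain ⟨P, hP⟩ := MessAux.joinedIn_norm_gt MessAux.one_lt_rank_E3 hrnn hpnorm hqnorm
  set PR : Set E3 := Set.range P with hPRdef
  have hPRcomp : IsCompact PR := isCompact_range P.continuous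
  have hPRconn : IsPreconnected PR := isPreconnected_range P.continuous
  have hPRS : ∀ x ∈ PR, r < ‖x‖ := by
    rintro x ⟨t, rfl⟩
    exact hP t
  have hpPR : p ∈ PR := ⟨0, P.source⟩
  have hqPR : q ∈ PR := ⟨1, P.target⟩
  -- the chain relation
  set step : Γ → Γ → Prop := fun γ δ =>
    ∃ x, x ∈ PR ∧ x ∈ (γ : E3 ≃ᵃ[ℝ] E3) '' K ∧ x ∈ (δ : E3 ≃ᵃ[ℝ] E3) '' K with hstepdef
  set Tset : Set Γ := {γ : Γ | ((γ : E3 ≃ᵃ[ℝ] E3) '' K ∩ PR).Nonempty} with hTdef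
  have hT : Tset.Finite := by
    refine (hpd (K ∪ PR) (hK.union hPRcomp)).subset ?_
    rintro γ ⟨x, ⟨y, hy, rfl⟩, hxPR⟩
    exact ⟨(γ : E3 ≃ᵃ[ℝ] E3) y, ⟨y, Or.inl hy, rfl⟩, Or.inr hxPR⟩
  set Reach : Set Γ := {δ : Γ | Relation.ReflTransGen step (a ^ m) δ} with hReachdef
  set U : Set E3 := ⋃ γ ∈ Tset ∩ Reach, ((γ : E3 ≃ᵃ[ℝ] E3) '' K ∩ PR) with hUdef
  set W : Set E3 := ⋃ γ ∈ Tset \ Reach, ((γ : E3 ≃ᵃ[ℝ] E3) '' K ∩ PR) with hWdef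
  have hUclosed : IsClosed U :=
    (hT.subset Set.inter_subset_left).isClosed_biUnion
      (fun γ _ => ((himg γ).inter hPRcomp).isClosed)
  have hWclosed : IsClosed W :=
    (hT.subset Set.diff_subset).isClosed_biUnion
      (fun γ _ => ((himg γ).inter hPRcomp).isClosed)
  have hcoverPR : ∀ x ∈ PR, x ∈ U ∪ W := by
    intro x hx
    obtain ⟨γ, hγ⟩ := hcov' x
    have hγT : γ ∈ Tset := ⟨x, hγ, hx⟩
    by_cases hR : γ ∈ Reach
    · exact Or.inl (Set.mem_biUnion ⟨hγT, hR⟩ ⟨hγ, hx⟩)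
    · exact Or.inr (Set.mem_biUnion ⟨hγT, hR⟩ ⟨hγ, hx⟩)
  have hdisj : ∀ x, x ∈ U → x ∈ W → False := by
    intro x hxU hxW
    obtain ⟨γ, ⟨_, hγR⟩, hxγ, hxPR⟩ := Set.mem_iUnion₂.mp hxU
    obtain ⟨δ, ⟨_, hδR⟩, hxδ, _⟩ := Set.mem_iUnion₂.mp hxW
    exact hδR (hγR.tail ⟨x, hxPR, hxγ, hxδ⟩)
  have hamT : (a ^ m : Γ) ∈ Tset := ⟨p, ⟨x₀, hx₀, rfl⟩, hpPR⟩
  have hpU : p ∈ U :=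
    Set.mem_biUnion ⟨hamT, Relation.ReflTransGen.refl⟩ ⟨⟨x₀, hx₀, rfl⟩, hpPR⟩
  have hPRU : PR ⊆ U := by
    by_contra hcon
    obtain ⟨x₁, hx₁PR, hx₁U⟩ := Set.not_subset.mp hcon
    have hsub : PR ⊆ Uᶜ ∪ Wᶜ := by
      intro x hx
      by_cases hxU : x ∈ U
      · exact Or.inr (fun hW => hdisj x hxU hW)
      · exact Or.inl hxU
    have hne1 : (PR ∩ Uᶜ).Nonempty := ⟨x₁, hx₁PR, hx₁U⟩
    have hne2 : (PR ∩ Wᶜ).Nonempty := ⟨p, hpPR, fun hW => hdisj p hpU hW⟩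
    obtain ⟨z, hzPR, hzU, hzW⟩ :=
      hPRconn Uᶜ Wᶜ hUclosed.isOpen_compl hWclosed.isOpen_compl hsub hne1 hne2
    exact (hcoverPR z hzPR).elim hzU hzW
  -- b^m is reachable
  have hreachb : (b ^ m : Γ) ∈ Reach := by
    have hqU : q ∈ U := hPRU hqPR
    obtain ⟨γ', ⟨_, hγ'R⟩, hqγ', hqPR'⟩ := Set.mem_iUnion₂.mp hqU
    exact hγ'R.tail ⟨q, hqPR', hqγ', ⟨x₀, hx₀, rfl⟩⟩
  -- head of toWord of (of i)^m
  have hhead : ∀ i : Fin 2, ((FreeGroup.of i) ^ m).toWord.head? = some (i, true) := by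
    intro i
    obtain ⟨m', rfl⟩ : ∃ m', m = m' + 1 := ⟨m - 1, by omega⟩
    rw [FreeGroup.toWord_of_pow, List.replicate_succ]
    rfl
  -- the invariant along chains
  have hmain : ∀ δ : Γ, Relation.ReflTransGen step (a ^ m) δ →
      N < (φ δ).norm ∧ ∃ s : Bool, (φ δ).toWord.head? = some ((0 : Fin 2), s) := by
    intro δ h
    induction h with
    | refl =>
      constructor
      · rw [hφa, FreeGroup.norm_of_pow]; exact hmN
      · exact ⟨true, by rw [hφa]; exact hhead 0⟩
    | @tail γ δ hsteps hstep ih =>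
      obtain ⟨x, hxPR, hxγ, hxδ⟩ := hstep
      obtain ⟨y, hy, hxy⟩ := hxγ
      obtain ⟨z, hz, hxz⟩ := hxδ
      -- γ⁻¹ * δ is in F
      have hprod : ((γ⁻¹ * δ : Γ) : E3 ≃ᵃ[ℝ] E3) z = y := by
        have h1 : ((γ⁻¹ * δ : Γ) : E3 ≃ᵃ[ℝ] E3) z
            = ((γ : E3 ≃ᵃ[ℝ] E3)⁻¹) ((δ : E3 ≃ᵃ[ℝ] E3) z) := by
          rw [Subgroup.coe_mul, Subgroup.coe_inv, AffineEquiv.coe_mul]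
          rfl
        rw [h1, hxz, AffineEquiv.inv_def, ← hxy, AffineEquiv.symm_apply_apply]
      have hrel : (γ⁻¹ * δ : Γ) ∈ F := ⟨y, ⟨z, hz, hprod⟩, hy⟩
      have hrelN : (φ (γ⁻¹ * δ)).norm ≤ N := hNle _ hrel
      -- δ is not short
      have hδbig : N < (φ δ).norm := by
        by_contra hsmall
        rw [not_lt] at hsmall
        have hδC : (δ : E3 ≃ᵃ[ℝ] E3) '' K ⊆ C :=
          Set.subset_biUnion_of_mem (u := fun γ : Γ => (γ : E3 ≃ᵃ[ℝ] E3) '' K) hsmall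
        have hxball : x ∈ Metric.closedBall 0 r := hCB (hδC ⟨z, hz, hxz⟩)
        have hxout : r < ‖x‖ := hPRS x hxPR
        rw [Metric.mem_closedBall, dist_zero_right] at hxball
        linarith
      obtain ⟨ihN, s, ihhead⟩ := ih
      refine ⟨hδbig, ?_⟩
      have hδne : (φ δ).toWord ≠ [] := by
        intro h0
        have : (φ δ).norm = 0 := by simp [FreeGroup.norm, h0]
        omega
      obtain ⟨y0, hy0⟩ : ∃ y0, (φ δ).toWord.head? = some y0 := by
        cases hL : (φ δ).toWord with
        | nil => exact absurd hL hδne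
        | cons u l => exact ⟨u, rfl⟩
      by_cases hcase : y0.1 = (0 : Fin 2)
      · refine ⟨y0.2, ?_⟩
        rw [hy0]
        congr 1
        exact (Prod.ext hcase rfl)
      · exfalso
        have hne2 : ((0 : Fin 2), s).1 ≠ y0.1 := fun h => hcase h.symm
        have hnormeq := MessAux.norm_inv_mul_of_head_ne (φ γ) (φ δ) ihhead hy0 hne2
        rw [← map_inv, ← map_mul] at hnormeq
        rw [hnormeq] at hrelN
        omega
  -- contradiction at b^m
  obtain ⟨_, s, hh⟩ := hmain _ hreachb
  rw [hφb, hhead 1] at hh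
  have : (1 : Fin 2) = 0 := (Prod.mk.injEq _ _ _ _ |>.mp (Option.some.inj hh)).1
  exact absurd this (by decide)
end

section
/- (Milnor–Wood inequality, formulation for flat circle bundles; Wood.) Let g ≥ 1 and let a₁, b₁, …, a_g, b_g be lifts of orientation-preserving circle homeomorphisms, i.e. strictly increasing homeomorphisms f : ℝ → ℝ satisfying f(x + 1) = f(x) + 1 for all x (the invertible elements of the monoid of degree-one lifts). Suppose the product of commutators [a₁,b₁]·[a₂,b₂]···[a_g,b_g] equals the translation x ↦ x + n for some integer n (so the underlying circle homeomorphisms satisfy the genus-g surface group relation, and n is the Euler number of the associated flat circle bundle). Then |n| ≤ 2g − 2. (This is the paper's inequality |Euler(ρ)| ≤ −χ(Σ) for flat oriented circle bundles over a closed oriented surface of genus g.) -/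
/-!
The translation number `τ` is conjugation invariant, additive on commuting lifts, and a
quasimorphism: `τ f + τ g ≤ c` with `c ∈ ℤ` forces `τ (f * g) ≤ c + 1`. Writing
`⁅a, b⁆ = (a b a⁻¹) b⁻¹` gives `|τ ⁅a, b⁆| ≤ 1`, so a product of `g - 1` commutators has
`|τ| ≤ 2g - 3`. Because `x ↦ x + n` is central, `[a₁,b₁] R = (x ↦ x + n)` gives
`n = τ [a₁,b₁] + τ R`, whence `|n| ≤ 2g - 2`. For `g = 1` the relation reads
`a b = (x ↦ x + n) b a`, and `τ (a b) = τ (b a)` forces `n = 0`.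
-/

open CircleDeg1Lift Multiplicative

open scoped commutatorElement

local notation "τ" => CircleDeg1Lift.translationNumber

namespace CircleDeg1Lift

lemma continuous_units (u : CircleDeg1Liftˣ) : Continuous (u : CircleDeg1Lift) :=
  (toOrderIso u).continuous

lemma commute_translate_intCast (f : CircleDeg1Lift) (n : ℤ) :
    Commute (↑(translate (ofAdd (n : ℝ)))) f :=
  commute_iff_commute.2 (f.commute_int_add n).symm

lemma translationNumber_units_mul_comm (f g : CircleDeg1Liftˣ) : τ ↑(f * g) = τ ↑(g * f) := by
  rw [show g * f = f⁻¹ * (f * g) * f by group]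
  simp only [Units.val_mul, translationNumber_conj_eq']

/-- At a point `x` with `g x = x + τ g` we get `(f * g) x < x + τ f + τ g + 1`, and a single
point suffices to bound a translation number by an integer. -/
lemma translationNumber_mul_le_of_le_int (f : CircleDeg1Lift) (g : CircleDeg1Liftˣ) {c : ℤ}
    (h : τ f + τ g ≤ c) : τ (f * g) ≤ c + 1 := by
  obtain ⟨x, hx⟩ := (g : CircleDeg1Lift).exists_eq_add_translationNumber (continuous_units g)
  have hfg : (f * g) x ≤ x + ((c + 1 : ℤ) : ℝ) := by
    have := f.map_lt_add_translationNumber_add_one (g x)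
    rw [mul_apply, hx]
    rw [hx] at this
    push_cast
    linarith
  exact_mod_cast translationNumber_le_of_le_add_int _ hfg

lemma abs_translationNumber_mul_le (f g : CircleDeg1Liftˣ) {c : ℤ}
    (h : |τ f + τ g| ≤ c) : |τ ↑(f * g)| ≤ c + 1 := by
  rw [abs_le] at h ⊢
  have hup := translationNumber_mul_le_of_le_int f g h.2
  have hlow := translationNumber_mul_le_of_le_int ↑g⁻¹ f⁻¹ (c := c)
    (by simp only [translationNumber_units_inv]; linarith)
  rw [← Units.val_mul, ← mul_inv_rev, translationNumber_units_inv, Units.val_mul] at hlow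
  rw [Units.val_mul]
  constructor <;> linarith

lemma abs_translationNumber_commutatorElement_le_one (a b : CircleDeg1Liftˣ) :
    |τ ↑⁅a, b⁆| ≤ 1 := by
  have h : |τ ↑(a * b * a⁻¹) + τ ↑b⁻¹| ≤ (0 : ℤ) := by
    simp only [Units.val_mul, translationNumber_conj_eq, translationNumber_units_inv]
    simp
  simpa [commutatorElement_def] using abs_translationNumber_mul_le _ _ h

lemma abs_translationNumber_list_prod_le (u : CircleDeg1Liftˣ) (l : List CircleDeg1Liftˣ)
    (h : ∀ v ∈ u :: l, |τ v| ≤ 1) : |τ ↑(u :: l).prod| ≤ 2 * l.length + 1 := by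
  induction l generalizing u with
  | nil => simpa using h u List.mem_cons_self
  | cons v l ih =>
    have hu := h u List.mem_cons_self
    have hl := ih v fun w hw => h w (List.mem_cons_of_mem u hw)
    have hsum : |τ u + τ ↑(v :: l).prod| ≤ ((2 * (l.length + 1) : ℕ) : ℤ) := by
      push_cast
      linarith [abs_add_le (τ u) (τ ↑(v :: l).prod)]
    have := abs_translationNumber_mul_le u _ hsum
    rw [List.prod_cons, List.length_cons]
    push_cast at this ⊢
    linarith

lemma abs_translationNumber_prod_commutatorElement_le {k : ℕ}
    (a b : Fin (k + 1) → CircleDeg1Liftˣ) :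
    |τ ↑(List.ofFn fun i => ⁅a i, b i⁆).prod| ≤ 2 * k + 1 := by
  rw [List.ofFn_succ]
  refine (abs_translationNumber_list_prod_le _ _ ?_).trans (by simp)
  simp only [List.mem_cons, List.mem_ofFn]
  rintro _ (rfl | ⟨i, rfl⟩) <;> exact abs_translationNumber_commutatorElement_le_one _ _

lemma translationNumber_add_eq_of_mul_eq_translate {f g : CircleDeg1Liftˣ} {n : ℤ}
    (h : f * g = translate (ofAdd (n : ℝ))) : τ f + τ g = n := by
  rw [eq_inv_mul_of_mul_eq h, Units.val_mul,
    translationNumber_mul_of_commute (commute_translate_intCast _ n).symm,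
    translationNumber_units_inv, translationNumber_translate]
  ring

lemma eq_zero_of_commutatorElement_eq_translate {a b : CircleDeg1Liftˣ} {n : ℤ}
    (h : ⁅a, b⁆ = translate (ofAdd (n : ℝ))) : n = 0 := by
  have hab : a * b = translate (ofAdd (n : ℝ)) * (b * a) := by
    rw [← h, commutatorElement_def]
    group
  have := congrArg (fun u : CircleDeg1Liftˣ => τ u) hab
  simp only [Units.val_mul (translate _),
    translationNumber_mul_of_commute (commute_translate_intCast _ n),
    translationNumber_translate, translationNumber_units_mul_comm a b] at this
  exact_mod_cast (add_eq_right.mp this.symm)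

end CircleDeg1Lift

/-- **Milnor–Wood inequality (Wood).** If lifts `a₁, b₁, …, a_g, b_g` of
orientation-preserving circle homeomorphisms (units of the monoid of degree-one
lifts) satisfy `[a₁,b₁]⋯[a_g,b_g] = (x ↦ x + n)` for some integer `n`, then
`|n| ≤ 2g − 2`. -/
theorem milnor_wood_inequality (g : ℕ) (hg : 1 ≤ g)
    (a b : Fin g → CircleDeg1Liftˣ) (n : ℤ)
    (h : ∀ x : ℝ,
      (((List.ofFn fun i => ⁅a i, b i⁆).prod : CircleDeg1Liftˣ) : CircleDeg1Lift) x = x + n) :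
    |n| ≤ 2 * (g : ℤ) - 2 := by
  have hP : (List.ofFn fun i => ⁅a i, b i⁆).prod = translate (ofAdd (n : ℝ)) :=
    Units.ext <| ext fun x => by rw [h, translate_apply, add_comm]
  obtain ⟨k, rfl⟩ : ∃ k, g = k + 1 := ⟨g - 1, by omega⟩
  rw [List.ofFn_succ, List.prod_cons] at hP
  rcases k with _ | k
  · simp [eq_zero_of_commutatorElement_eq_translate (by simpa using hP)]
  · have hC := abs_translationNumber_commutatorElement_le_one (a 0) (b 0)
    have hR :=
      abs_translationNumber_prod_commutatorElement_le (fun i => a i.succ) fun i => b i.succ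
    have hn : |(n : ℝ)| ≤ 2 * k + 2 := by
      rw [← translationNumber_add_eq_of_mul_eq_translate hP]
      exact (abs_add_le _ _).trans (by linarith)
    have : |n| ≤ 2 * k + 2 := by exact_mod_cast hn
    push_cast
    linarith
end
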